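/- arXiv:1303.5039 — 4 statements merged into one kernel-verified Lean document; each statement's English description precedes it below -/
import Mathlib

section
/- For contexts Γ₁ = (G₁, L₁) and Γ₂ = (G₂, L₂), we have Γ₁ ≤ Γ₂ if and only if there exists a list L such that L₂ = L ++ L₁ and every variable x ∈ G₁ satisfies x ∈ G₂ or x ∈ L. -/
/-!
Each generating step either prepends one variable to the local context or changes the global
context so that every dropped variable is the one just prepended; composing steps keeps this
shape, which gives the forward direction. Conversely, given `L₂ = L ++ L₁`, first enlarge `G₁`
to `G₂ ∪ L`, then push the variables of `L` onto the local context one at a time, each push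
removing it from the global context.
-/

abbrev Var := ℕ
abbrev Ctx := Finset Var × List Var

/-- `Γ,x` : extend the local part with `x` as innermost (rightmost) variable.
Lists represent local contexts with head = outermost (leftmost). -/
def Ctx.snoc (Γ : Ctx) (x : Var) : Ctx := (Γ.1, Γ.2 ++ [x])

/-- The least partial order on contexts generated by
`(G,L) < (G ∪ {x}, L)` for `x ∉ G` and `(G,L) < (G \ {x}, x::L)`. -/
inductive CtxLe : Ctx → Ctx → Prop
  | refl (Γ : Ctx) : CtxLe Γ Γ
  | trans {Γ Δ Θ : Ctx} : CtxLe Γ Δ → CtxLe Δ Θ → CtxLe Γ Θ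
  | glob (G : Finset Var) (L : List Var) (x : Var) (h : x ∉ G) :
      CtxLe (G, L) (insert x G, L)
  | loc (G : Finset Var) (L : List Var) (x : Var) :
      CtxLe (G, L) (G.erase x, x :: L)

def Compatible (Γ Δ : Ctx) : Prop := ∃ Θ, CtxLe Γ Θ ∧ CtxLe Δ Θ

namespace CtxLe

theorem exists_append {Γ Δ : Ctx} (h : CtxLe Γ Δ) :
    ∃ L : List Var, Δ.2 = L ++ Γ.2 ∧ ∀ x ∈ Γ.1, x ∈ Δ.1 ∨ x ∈ L := by
  induction h with
  | refl Γ => exact ⟨[], rfl, fun x hx => .inl hx⟩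
  | trans _ _ ih₁ ih₂ =>
    obtain ⟨L, hL, hG⟩ := ih₁
    obtain ⟨L', hL', hG'⟩ := ih₂
    refine ⟨L' ++ L, by rw [hL', hL, List.append_assoc], fun x hx => ?_⟩
    rcases hG x hx with hx | hx
    · rcases hG' x hx with hx | hx
      · exact .inl hx
      · exact .inr (List.mem_append_left _ hx)
    · exact .inr (List.mem_append_right _ hx)
  | glob G L x _ => exact ⟨[], rfl, fun y hy => .inl (Finset.mem_insert_of_mem hy)⟩
  | loc G L x =>
    refine ⟨[x], rfl, fun y hy => ?_⟩
    by_cases hyx : y = x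
    · exact .inr (List.mem_singleton.mpr hyx)
    · exact .inl (Finset.mem_erase.mpr ⟨hyx, hy⟩)

theorem union_right (G S : Finset Var) (L : List Var) : CtxLe (G, L) (G ∪ S, L) := by
  induction S using Finset.induction_on with
  | empty => simpa using refl _
  | insert a S _ ih =>
    rw [Finset.union_insert]
    by_cases ha : a ∈ G ∪ S
    · rwa [Finset.insert_eq_of_mem ha]
    · exact ih.trans (glob _ _ a ha)

theorem of_subset {G G' : Finset Var} (L : List Var) (h : G ⊆ G') : CtxLe (G, L) (G', L) := by
  simpa [Finset.union_eq_right.mpr h] using union_right G G' L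

theorem append_of_subset_union {G G' : Finset Var} {L₁ : List Var} (L : List Var)
    (h : G ⊆ G' ∪ L.toFinset) : CtxLe (G, L₁) (G', L ++ L₁) := by
  induction L generalizing G' with
  | nil => simpa using of_subset L₁ h
  | cons y L ih =>
    have hG : G ⊆ insert y G' ∪ L.toFinset := by
      simpa [Finset.insert_union, Finset.union_insert] using h
    exact (ih hG).trans <| (loc _ _ y).trans <| of_subset _ (Finset.erase_insert_subset y G')

end CtxLe

/-- Characterisation of the order on contexts: `(G₁,L₁) ≤ (G₂,L₂)` iff
`L₂ = L ++ L₁` for some `L` and every `x ∈ G₁` is in `G₂` or in `L`. -/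
theorem ctxLe_iff (G₁ G₂ : Finset Var) (L₁ L₂ : List Var) :
    CtxLe (G₁, L₁) (G₂, L₂) ↔
      ∃ L : List Var, L₂ = L ++ L₁ ∧ ∀ x ∈ G₁, x ∈ G₂ ∨ x ∈ L := by
  refine ⟨CtxLe.exists_append, ?_⟩
  rintro ⟨L, rfl, hG⟩
  exact CtxLe.append_of_subset_union L fun x hx => by simpa using hG x hx
end

section
/- Two contexts (G₁, L₁) and (G₂, L₂) are compatible (have a common upper bound in ≤) if and only if L₁ is a suffix of L₂ or L₂ is a suffix of L₁; moreover, any two compatible contexts have a least upper bound ⊔, computed by: (Γ,x) ⊔ (Δ,x) = (Γ ⊔ Δ),x; (Γ,x) ⊔ (G, nil) = (Γ ⊔ (G \ {x}, nil)),x; symmetrically; and (G₁, nil) ⊔ (G₂, nil) = (G₁ ∪ G₂, nil). -/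
/-- Auxiliary supremum on contexts whose local lists have head = innermost. -/
def supAux : Finset Var → List Var → Finset Var → List Var → Option (Finset Var × List Var)
  | G₁, [], G₂, [] => some (G₁ ∪ G₂, [])
  | G₁, x :: l₁, G₂, [] =>
      (supAux G₁ l₁ (G₂.erase x) []).map fun p => (p.1, x :: p.2)
  | G₁, [], G₂, x :: l₂ =>
      (supAux (G₁.erase x) [] G₂ l₂).map fun p => (p.1, x :: p.2)
  | G₁, x :: l₁, G₂, y :: l₂ =>
      if x = y then (supAux G₁ l₁ G₂ l₂).map fun p => (p.1, x :: p.2) else none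
  termination_by _ l₁ _ l₂ => l₁.length + l₂.length

/-- The (partial) supremum `Γ ⊔ Δ` of two contexts. -/
def ctxSup (Γ Δ : Ctx) : Option Ctx :=
  (supAux Γ.1 Γ.2.reverse Δ.1 Δ.2.reverse).map fun p => (p.1, p.2.reverse)

/-
Unfolding the generating steps, `(G, L) ≤ (G', L')` holds exactly when `L' = M ++ L` for some
list `M` of newly localised variables and `G ⊆ G' ∪ M`. Hence a common upper bound forces one
local list to be a suffix of the other, and if `L₂ = M ++ L₁` the context
`(G₁ \ M ∪ G₂, M ++ L₁)` is an upper bound below every other one; `ctxSup` computes exactly this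
context, since it walks the common part of the reversed lists and then erases `M` from `G₁`.
-/

lemma ctxLe_union (G s : Finset Var) (L : List Var) : CtxLe (G, L) (G ∪ s, L) := by
  induction s using Finset.induction_on with
  | empty => simpa using CtxLe.refl (G, L)
  | insert x s _ ih =>
    rw [Finset.union_insert]
    by_cases hx : x ∈ G ∪ s
    · rwa [Finset.insert_eq_of_mem hx]
    · exact ih.trans (CtxLe.glob _ L x hx)

lemma ctxLe_of_subset {G G' : Finset Var} (L : List Var) (h : G ⊆ G') : CtxLe (G, L) (G', L) := by
  simpa [Finset.union_eq_right.2 h] using ctxLe_union G G' L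

lemma CtxLe.exists_append_s2 {Γ Δ : Ctx} (h : CtxLe Γ Δ) :
    ∃ M : List Var, Δ.2 = M ++ Γ.2 ∧ Γ.1 ⊆ Δ.1 ∪ M.toFinset := by
  induction h with
  | refl Γ => exact ⟨[], rfl, by simp⟩
  | trans _ _ ih₁ ih₂ =>
    obtain ⟨M₁, e₁, s₁⟩ := ih₁
    obtain ⟨M₂, e₂, s₂⟩ := ih₂
    refine ⟨M₂ ++ M₁, by simp [e₁, e₂], fun a ha => ?_⟩
    have := s₁ ha
    simp only [Finset.mem_union, List.mem_toFinset, List.mem_append] at this s₂ ⊢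
    rcases this with h | h
    · have := s₂ h
      simp only [Finset.mem_union, List.mem_toFinset] at this
      tauto
    · tauto
  | glob G L x _ => exact ⟨[], rfl, by simp [Finset.subset_insert]⟩
  | loc G L x =>
    refine ⟨[x], rfl, fun a ha => ?_⟩
    by_cases hax : a = x <;> simp_all

lemma ctxLe_of_subset_append {G G' : Finset Var} (M L : List Var)
    (h : G ⊆ G' ∪ M.toFinset) : CtxLe (G, L) (G', M ++ L) := by
  induction M generalizing G' with
  | nil => simpa using ctxLe_of_subset L (by simpa using h)
  | cons x M ih =>
    have h' : G ⊆ insert x G' ∪ M.toFinset := by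
      intro a ha
      have := h ha
      simp only [Finset.mem_union, List.toFinset_cons, Finset.mem_insert, List.mem_toFinset] at *
      tauto
    refine (ih h').trans ((CtxLe.loc _ _ x).trans (ctxLe_of_subset _ fun a ha => ?_))
    simp only [Finset.mem_erase, Finset.mem_insert] at ha
    tauto

theorem ctxLe_iff_s2 {G G' : Finset Var} {L L' : List Var} :
    CtxLe (G, L) (G', L') ↔ ∃ M, L' = M ++ L ∧ G ⊆ G' ∪ M.toFinset :=
  ⟨CtxLe.exists_append_s2, fun ⟨M, e, h⟩ => e ▸ ctxLe_of_subset_append M L h⟩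

lemma suffix_or_suffix_of_compatible {Γ Δ : Ctx} (h : Compatible Γ Δ) :
    Γ.2 <:+ Δ.2 ∨ Δ.2 <:+ Γ.2 := by
  obtain ⟨Θ, h₁, h₂⟩ := h
  obtain ⟨M₁, e₁, -⟩ := h₁.exists_append_s2
  obtain ⟨M₂, e₂, -⟩ := h₂.exists_append_s2
  exact List.suffix_or_suffix_of_suffix ⟨M₁, e₁.symm⟩ ⟨M₂, e₂.symm⟩

def IsCtxLub (Γ Δ Θ : Ctx) : Prop :=
  CtxLe Γ Θ ∧ CtxLe Δ Θ ∧ ∀ Ψ : Ctx, CtxLe Γ Ψ → CtxLe Δ Ψ → CtxLe Θ Ψ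

lemma IsCtxLub.symm {Γ Δ Θ : Ctx} (h : IsCtxLub Γ Δ Θ) : IsCtxLub Δ Γ Θ :=
  ⟨h.2.1, h.1, fun Ψ h₂ h₁ => h.2.2 Ψ h₁ h₂⟩

lemma IsCtxLub.compatible {Γ Δ Θ : Ctx} (h : IsCtxLub Γ Δ Θ) : Compatible Γ Δ :=
  ⟨Θ, h.1, h.2.1⟩

lemma isCtxLub_append (G₁ G₂ : Finset Var) (L M : List Var) :
    IsCtxLub (G₁, L) (G₂, M ++ L) (G₁ \ M.toFinset ∪ G₂, M ++ L) := by
  refine ⟨ctxLe_iff_s2.2 ⟨M, rfl, fun a ha => ?_⟩, ctxLe_of_subset _ Finset.subset_union_right, ?_⟩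
  · by_cases haM : a ∈ M.toFinset <;> simp_all
  · rintro ⟨H, K⟩ h₁ h₂
    obtain ⟨N₁, rfl, s₁⟩ := ctxLe_iff_s2.1 h₁
    obtain ⟨N₂, e, s₂⟩ := ctxLe_iff_s2.1 h₂
    have hN : N₁ = N₂ ++ M := List.append_cancel_right (by simpa using e)
    subst hN
    refine ctxLe_iff_s2.2 ⟨N₂, by simp, Finset.union_subset (fun a ha => ?_) s₂⟩
    obtain ⟨haG, haM⟩ := Finset.mem_sdiff.1 ha
    have := s₁ haG
    simp only [Finset.mem_union, List.mem_toFinset, List.mem_append] at this haM ⊢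
    tauto

lemma supAux_nil_left (G₁ G₂ : Finset Var) (r : List Var) :
    supAux G₁ [] G₂ r = some (G₁ \ r.toFinset ∪ G₂, r) := by
  induction r generalizing G₁ with
  | nil => simp [supAux]
  | cons x r ih =>
    rw [supAux, ih]
    simp [Finset.sdiff_insert, Finset.erase_sdiff_comm]

lemma supAux_self_append (G₁ G₂ : Finset Var) (l r : List Var) :
    supAux G₁ l G₂ (l ++ r) = some (G₁ \ r.toFinset ∪ G₂, l ++ r) := by
  induction l with
  | nil => exact supAux_nil_left G₁ G₂ r
  | cons x l ih =>
    rw [List.cons_append, supAux, if_pos rfl, ih]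
    rfl

lemma supAux_comm (G₁ G₂ : Finset Var) (l₁ l₂ : List Var) :
    supAux G₁ l₁ G₂ l₂ = supAux G₂ l₂ G₁ l₁ := by
  fun_induction supAux G₁ l₁ G₂ l₂ with
  | case1 => simp [supAux, Finset.union_comm]
  | case2 | case3 | case4 => simp_all [supAux]
  | case5 _ x _ _ y _ hxy => simp [supAux, Ne.symm hxy]

lemma ctxSup_comm (Γ Δ : Ctx) : ctxSup Γ Δ = ctxSup Δ Γ := by
  rw [ctxSup, ctxSup, supAux_comm]

lemma ctxSup_append (G₁ G₂ : Finset Var) (L M : List Var) :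
    ctxSup (G₁, L) (G₂, M ++ L) = some (G₁ \ M.toFinset ∪ G₂, M ++ L) := by
  simp [ctxSup, supAux_self_append]

/-- Two contexts are compatible iff one local part is a suffix of the other;
moreover compatible contexts have a least upper bound, computed by `ctxSup`. -/
theorem compatible_iff_suffix_and_lub (G₁ G₂ : Finset Var) (L₁ L₂ : List Var) :
    (Compatible (G₁, L₁) (G₂, L₂) ↔ (L₁ <:+ L₂ ∨ L₂ <:+ L₁)) ∧
    (Compatible (G₁, L₁) (G₂, L₂) →
      ∃ Θ : Ctx, ctxSup (G₁, L₁) (G₂, L₂) = some Θ ∧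
        CtxLe (G₁, L₁) Θ ∧ CtxLe (G₂, L₂) Θ ∧
        ∀ Ψ : Ctx, CtxLe (G₁, L₁) Ψ → CtxLe (G₂, L₂) Ψ → CtxLe Θ Ψ) := by
  have lub : L₁ <:+ L₂ ∨ L₂ <:+ L₁ →
      ∃ Θ, ctxSup (G₁, L₁) (G₂, L₂) = some Θ ∧ IsCtxLub (G₁, L₁) (G₂, L₂) Θ := by
    rintro (⟨M, rfl⟩ | ⟨M, rfl⟩)
    · exact ⟨_, ctxSup_append G₁ G₂ L₁ M, isCtxLub_append G₁ G₂ L₁ M⟩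
    · exact ⟨_, by rw [ctxSup_comm, ctxSup_append], (isCtxLub_append G₂ G₁ L₂ M).symm⟩
  have hiff : Compatible (G₁, L₁) (G₂, L₂) ↔ (L₁ <:+ L₂ ∨ L₂ <:+ L₁) :=
    ⟨suffix_or_suffix_of_compatible, fun h => (lub h).elim fun _ hΘ => hΘ.2.compatible⟩
  exact ⟨hiff, fun h => lub (hiff.1 h)⟩
end

section
/- Any context with empty local part (i.e., of the form (G, nil)) is compatible with every context Γ. -/
/-!
Adding a global variable and pushing a variable onto the local list are both increasing, so
`(G, L) ≤ (G', L')` whenever `G ⊆ G'` and `L` is a suffix of `L'`. Hence `(G ∪ G', L')` bounds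
both `(G, [])` and `(G', L')`.
-/

namespace CtxLe

theorem insert_global (G : Finset Var) (L : List Var) (x : Var) :
    CtxLe (G, L) (insert x G, L) := by
  by_cases hx : x ∈ G
  · rw [Finset.insert_eq_of_mem hx]
    exact refl _
  · exact glob G L x hx

/-- `loc` moves `x` out of the global part and `glob` puts it back, in whichever order keeps the
side condition of `glob` true. -/
theorem cons_local (G : Finset Var) (L : List Var) (x : Var) :
    CtxLe (G, L) (G, x :: L) := by
  by_cases hx : x ∈ G
  · have h := glob (G.erase x) (x :: L) x (Finset.notMem_erase x G)
    rw [Finset.insert_erase hx] at h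
    exact (loc G L x).trans h
  · have h := loc (insert x G) L x
    rw [Finset.erase_insert hx] at h
    exact (glob G L x hx).trans h

theorem union_global (G H : Finset Var) (L : List Var) :
    CtxLe (G, L) (G ∪ H, L) := by
  induction H using Finset.induction with
  | empty => simpa using refl (G, L)
  | insert x H _ ih =>
    rw [Finset.union_insert]
    exact ih.trans (insert_global _ _ x)

theorem append_local (G : Finset Var) (xs L : List Var) :
    CtxLe (G, L) (G, xs ++ L) := by
  induction xs with
  | nil => exact refl _
  | cons x xs ih => exact ih.trans (cons_local G (xs ++ L) x)

theorem of_subset_of_suffix {G G' : Finset Var} {L L' : List Var} (hG : G ⊆ G')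
    (hL : L <:+ L') : CtxLe (G, L) (G', L') := by
  obtain ⟨xs, rfl⟩ := hL
  have h := union_global G (G' \ G) L
  rw [Finset.union_sdiff_of_subset hG] at h
  exact h.trans (append_local G' xs L)

end CtxLe

/-- Any context with empty local part is compatible with every context. -/
theorem set_compatible_with_all (G : Finset Var) (Γ : Ctx) :
    Compatible (G, ([] : List Var)) Γ :=
  ⟨(G ∪ Γ.1, Γ.2),
    CtxLe.of_subset_of_suffix Finset.subset_union_left List.nil_suffix,
    CtxLe.of_subset_of_suffix Finset.subset_union_right (List.suffix_refl _)⟩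
end

section
/- If O_{λx}(Γ ⊔ Δ) is defined, then O_{λx}(Γ ⊔ Δ) = O_{λx}(Γ) ⊔ O_{λx}(Δ). Consequently, if O_{λx}(Γ) is defined and Γ ≥ Δ, then O_{λx}(Δ) is defined and O_{λx}(Γ) ≥ O_{λx}(Δ). -/
/-- The partial operation `O_{λx}` : `O_{λx}(Γ,x) = Γ`, `O_{λx}(G, nil) = (G \ {x}, nil)`,
undefined otherwise. -/
def Olam (x : Var) (Γ : Ctx) : Option Ctx :=
  match Γ.2.reverse with
  | [] => some (Γ.1.erase x, [])
  | y :: l => if y = x then some (Γ.1, l.reverse) else none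

theorem Olam_mono (x : Var) {Δ Γ : Ctx} (h : CtxLe Δ Γ) :
    ∀ Γ', Olam x Γ = some Γ' → ∃ Δ', Olam x Δ = some Δ' ∧ CtxLe Δ' Γ' := by
  induction h with
  | refl Γ => exact fun Γ' h => ⟨Γ', h, CtxLe.refl _⟩
  | trans h1 h2 ih1 ih2 =>
    intro Γ' hΓ
    obtain ⟨E', hE, hle⟩ := ih2 Γ' hΓ
    obtain ⟨D', hD, hle2⟩ := ih1 E' hE
    exact ⟨D', hD, hle2.trans hle⟩
  | glob G L y hy =>
    intro Γ' hΓ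
    cases hL : L.reverse with
    | nil =>
      simp only [Olam, hL, Option.some.injEq] at hΓ
      subst hΓ
      refine ⟨(G.erase x, []), by simp [Olam, hL], ?_⟩
      by_cases hxy : y = x
      · subst hxy
        rw [Finset.erase_insert hy, Finset.erase_eq_of_notMem hy]
        exact CtxLe.refl _
      · rw [Finset.erase_insert_of_ne hxy]
        exact CtxLe.glob _ _ y (fun hm => hy (Finset.mem_of_mem_erase hm))
    | cons z t =>
      simp only [Olam, hL] at hΓ
      split_ifs at hΓ with hz
      · subst hz
        injection hΓ with hΓ
        subst hΓ
        refine ⟨(G, t.reverse), by simp [Olam, hL], CtxLe.glob _ _ y hy⟩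
  | loc G L y =>
    intro Γ' hΓ
    cases hL : L.reverse with
    | nil =>
      have hL' : L = [] := by simpa using congrArg List.reverse hL
      subst hL'
      simp only [Olam, List.reverse_cons, List.reverse_nil, List.nil_append] at hΓ
      split_ifs at hΓ with hz
      · subst hz
        injection hΓ with hΓ
        subst hΓ
        exact ⟨(G.erase y, []), by simp [Olam], CtxLe.refl _⟩
    | cons z t =>
      simp only [Olam, List.reverse_cons, hL, List.cons_append] at hΓ
      split_ifs at hΓ with hz
      · subst hz
        injection hΓ with hΓ
        subst hΓ
        refine ⟨(G, t.reverse), by simp [Olam, hL], ?_⟩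
        have : (t ++ [y]).reverse = y :: t.reverse := by simp
        rw [this]
        exact CtxLe.loc G t.reverse y

/-- `O_{λx}` commutes with suprema, and is monotone (downwards defined). -/
theorem Olam_sup_and_monotone :
    (∀ (x : Var) (Γ Δ Θ Ψ : Ctx), ctxSup Γ Δ = some Θ → Olam x Θ = some Ψ →
      ∃ Γ' Δ' : Ctx, Olam x Γ = some Γ' ∧ Olam x Δ = some Δ' ∧
        ctxSup Γ' Δ' = some Ψ) ∧
    (∀ (x : Var) (Γ Δ Γ' : Ctx), Olam x Γ = some Γ' → CtxLe Δ Γ →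
      ∃ Δ' : Ctx, Olam x Δ = some Δ' ∧ CtxLe Δ' Γ') := by
  constructor
  · intro x Γ Δ Θ Ψ hsup hO
    obtain ⟨G1, L1⟩ := Γ
    obtain ⟨G2, L2⟩ := Δ
    simp only [ctxSup, Option.map_eq_some_iff] at hsup
    obtain ⟨p, hp, rfl⟩ := hsup
    cases hr1 : L1.reverse with
    | nil =>
      cases hr2 : L2.reverse with
      | nil =>
        rw [hr1, hr2] at hp
        simp only [supAux, Option.some.injEq] at hp
        subst hp
        simp only [Olam, List.reverse_reverse, List.reverse_nil] at hO ⊢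
        injection hO with hO
        subst hO
        refine ⟨(G1.erase x, []), (G2.erase x, []), by simp [Olam, hr1], by simp [Olam, hr2], ?_⟩
        simp [ctxSup, supAux, Finset.erase_union_distrib]
      | cons z t2 =>
        rw [hr1, hr2] at hp
        simp only [supAux, Option.map_eq_some_iff] at hp
        obtain ⟨q, hq, rfl⟩ := hp
        simp only [Olam, List.reverse_reverse] at hO
        split_ifs at hO with hz
        · subst hz
          injection hO with hO
          subst hO
          refine ⟨(G1.erase z, []), (G2, t2.reverse), by simp [Olam, hr1], by simp [Olam, hr2], ?_⟩
          simp [ctxSup, hq]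
    | cons z t1 =>
      cases hr2 : L2.reverse with
      | nil =>
        rw [hr1, hr2] at hp
        simp only [supAux, Option.map_eq_some_iff] at hp
        obtain ⟨q, hq, rfl⟩ := hp
        simp only [Olam, List.reverse_reverse] at hO
        split_ifs at hO with hz
        · subst hz
          injection hO with hO
          subst hO
          refine ⟨(G1, t1.reverse), (G2.erase z, []), by simp [Olam, hr1], by simp [Olam, hr2], ?_⟩
          simp [ctxSup, hq]
      | cons w t2 =>
        rw [hr1, hr2] at hp
        simp only [supAux] at hp
        split_ifs at hp with hzw
        · subst hzw
          simp only [Option.map_eq_some_iff] at hp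
          obtain ⟨q, hq, rfl⟩ := hp
          simp only [Olam, List.reverse_reverse] at hO
          split_ifs at hO with hz
          · subst hz
            injection hO with hO
            subst hO
            refine ⟨(G1, t1.reverse), (G2, t2.reverse), by simp [Olam, hr1], by simp [Olam, hr2], ?_⟩
            simp [ctxSup, hq]
  · intro x Γ Δ Γ' hΓ h
    exact Olam_mono x h Γ' hΓ
end
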